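/- Let H be a nonnegative random variable with E[H] > 0 and E[H²] < ∞, let λ > 0, and set ρ = λE[H], h*(λ) = E[e^{−λH}], and Cv[H]² = E[H²]/(E[H])² − 1. Define v(ρ) = (√(1 + ρ²((2−ρ)² − 2)) − 1)/ρ² for ρ ∈ (0, 2−√2). Then: (i) v is strictly decreasing on (0, 2−√2) with v(ρ) < lim_{ρ→0+} v(ρ) = 1; and (ii) if ρ ∈ (0, 2−√2) and Cv[H]² ≤ v(ρ), then 1/(λ h*(λ)) ≥ λE[H²]/(2(1−ρ)) + E[H] + (1−ρ)E[H]/(ρ h*(λ)). -/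

import Mathlib

/-!
`v(ρ)` is the positive root of `ρ² x² + 2x = ρ² - 4ρ + 2`, whose right side is positive for
`ρ < 2 - √2`; monotonicity and `v(ρ) < 1` are read off this equation, and rationalising gives
`v(ρ) = (ρ² - 4ρ + 2) / (1 + √…)`, continuous at `0` with value `1`.

After multiplying by `λ h*(λ)`, the AoI comparison becomes
`h*(λ) (λ²E[H²] + 2ρ(1-ρ)) ≤ 2ρ(1-ρ)`. The bound `e^{-x} ≤ 1 - x + x²/2` gives
`h*(λ) ≤ 1 - ρ + (1 + c) ρ² / 2` with `c = Cv[H]²`, and substituting it leaves the excess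
`ρ²/2 · (ρ² c² + 2c - (ρ² - 4ρ + 2))`, which is nonpositive for `-1 ≤ c ≤ v(ρ)`.
-/

open MeasureTheory Filter Topology

noncomputable def aoiThreshold (r : ℝ) : ℝ :=
  (Real.sqrt (1 + r ^ 2 * ((2 - r) ^ 2 - 2)) - 1) / r ^ 2

section Threshold

variable {r : ℝ}

lemma sq_sub_four_mul_add_two_pos (hr : r < 2 - Real.sqrt 2) : 0 < r ^ 2 - 4 * r + 2 := by
  have h2 : Real.sqrt 2 ^ 2 = 2 := Real.sq_sqrt zero_le_two
  have hfac : 0 < (2 - Real.sqrt 2 - r) * (2 + Real.sqrt 2 - r) :=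
    mul_pos (by linarith) (by linarith [Real.sqrt_nonneg 2])
  linear_combination hfac - h2

lemma aoiThreshold_eq_div (hr : r ≠ 0) (hd : 0 ≤ 1 + r ^ 2 * ((2 - r) ^ 2 - 2)) :
    aoiThreshold r = (r ^ 2 - 4 * r + 2) / (1 + Real.sqrt (1 + r ^ 2 * ((2 - r) ^ 2 - 2))) := by
  have hS := Real.sq_sqrt hd
  have hpos : 0 < 1 + Real.sqrt (1 + r ^ 2 * ((2 - r) ^ 2 - 2)) := by positivity
  rw [aoiThreshold, div_eq_div_iff (pow_ne_zero 2 hr) hpos.ne']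
  linear_combination hS

lemma aoiThreshold_quadratic (hr : r ≠ 0) (hd : 0 ≤ 1 + r ^ 2 * ((2 - r) ^ 2 - 2)) :
    r ^ 2 * aoiThreshold r ^ 2 + 2 * aoiThreshold r = r ^ 2 - 4 * r + 2 := by
  have hS := Real.sq_sqrt hd
  rw [aoiThreshold]
  field_simp
  linear_combination hS

lemma lt_one_of_lt_two_sub_sqrt_two (hr : r < 2 - Real.sqrt 2) : r < 1 := by
  linarith [Real.one_lt_sqrt_two]

lemma aoiThreshold_disc_nonneg (hr : r < 2 - Real.sqrt 2) :
    0 ≤ 1 + r ^ 2 * ((2 - r) ^ 2 - 2) := by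
  have hp := sq_sub_four_mul_add_two_pos hr
  have : (2 - r) ^ 2 - 2 = r ^ 2 - 4 * r + 2 := by ring
  rw [this]
  positivity

lemma aoiThreshold_pos (hr : r ∈ Set.Ioo 0 (2 - Real.sqrt 2)) : 0 < aoiThreshold r := by
  rw [aoiThreshold_eq_div hr.1.ne' (aoiThreshold_disc_nonneg hr.2)]
  exact div_pos (sq_sub_four_mul_add_two_pos hr.2) (by positivity)

lemma aoiThreshold_lt_one (hr : r ∈ Set.Ioo 0 (2 - Real.sqrt 2)) : aoiThreshold r < 1 := by
  have hq := aoiThreshold_quadratic hr.1.ne' (aoiThreshold_disc_nonneg hr.2)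
  by_contra! h
  nlinarith [hr.1, mul_le_mul h h zero_le_one (zero_le_one.trans h)]

lemma sq_mul_sq_add_two_mul_le_of_le_aoiThreshold (hr : r ∈ Set.Ioo 0 (2 - Real.sqrt 2))
    {c : ℝ} (hc : -1 ≤ c) (hcv : c ≤ aoiThreshold r) :
    r ^ 2 * c ^ 2 + 2 * c ≤ r ^ 2 - 4 * r + 2 := by
  have hq := aoiThreshold_quadratic hr.1.ne' (aoiThreshold_disc_nonneg hr.2)
  have hr1 := lt_one_of_lt_two_sub_sqrt_two hr.2
  have hfac : 0 ≤ r ^ 2 * (aoiThreshold r + c) + 2 := by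
    nlinarith [aoiThreshold_pos hr, mul_lt_mul'' hr1 hr1 hr.1.le hr.1.le, sq_nonneg r]
  nlinarith [mul_nonneg (sub_nonneg.2 hcv) hfac]

lemma strictAntiOn_aoiThreshold : StrictAntiOn aoiThreshold (Set.Ioo 0 (2 - Real.sqrt 2)) := by
  intro a ha b hb hab
  by_contra! hle
  have hqa := aoiThreshold_quadratic ha.1.ne' (aoiThreshold_disc_nonneg ha.2)
  have hqb := aoiThreshold_quadratic hb.1.ne' (aoiThreshold_disc_nonneg hb.2)
  have hva := aoiThreshold_pos ha
  have hmul : a * aoiThreshold a ≤ b * aoiThreshold b := mul_le_mul hab.le hle hva.le hb.1.le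
  have hsq := pow_le_pow_left₀ (mul_pos ha.1 hva).le hmul 2
  have hb1 := lt_one_of_lt_two_sub_sqrt_two hb.2
  nlinarith [mul_pos (sub_pos.2 hab) (show 0 < 4 - a - b by linarith [ha.2])]

lemma tendsto_aoiThreshold_nhdsGT_zero : Tendsto aoiThreshold (𝓝[>] 0) (𝓝 1) := by
  set g : ℝ → ℝ := fun r =>
    (r ^ 2 - 4 * r + 2) / (1 + Real.sqrt (1 + r ^ 2 * ((2 - r) ^ 2 - 2)))
  have hg : ContinuousAt g 0 :=
    ContinuousAt.div (by fun_prop) (by fun_prop) (by positivity)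
  have hg0 : g 0 = 1 := by norm_num [g]
  have hdom : Set.Ioo (0 : ℝ) (2 - Real.sqrt 2) ∈ 𝓝[>] 0 :=
    Ioo_mem_nhdsGT (by nlinarith [Real.sqrt_nonneg 2, Real.sq_sqrt zero_le_two])
  refine (hg0 ▸ hg.continuousWithinAt.tendsto).congr' ?_
  filter_upwards [hdom] with r hr
  exact (aoiThreshold_eq_div hr.1.ne' (aoiThreshold_disc_nonneg hr.2)).symm

end Threshold

lemma Real.exp_neg_le_one_sub_add_sq_div_two {x : ℝ} (hx : 0 ≤ x) :
    Real.exp (-x) ≤ 1 - x + x ^ 2 / 2 := by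
  let f : ℝ → ℝ := fun y => 1 - y + y ^ 2 / 2 - Real.exp (-y)
  have hf : ∀ y, HasDerivAt f (-1 + y + Real.exp (-y)) y := by
    intro y
    refine ((((hasDerivAt_id y).const_sub 1).add ((hasDerivAt_pow 2 y).div_const 2)).sub
      (hasDerivAt_neg y).exp).congr_deriv (by norm_num)
  have hmono : Monotone f := monotone_of_deriv_nonneg (fun y => (hf y).differentiableAt)
    fun y => (hf y).deriv ▸ by linarith [Real.add_one_le_exp (-y)]
  simpa [f] using hmono hx

section Laplace

variable {Ω : Type*} [MeasurableSpace Ω] {μ : Measure Ω} {H : Ω → ℝ} {lam : ℝ}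

lemma integrable_exp_neg_mul [IsFiniteMeasure μ] (hH : ∀ᵐ ω ∂μ, 0 ≤ H ω)
    (hHm : AEStronglyMeasurable H μ) (hlam : 0 ≤ lam) :
    Integrable (fun ω => Real.exp (-(lam * H ω))) μ := by
  refine .of_bound (Real.continuous_exp.comp_aestronglyMeasurable (hHm.const_mul lam).neg) 1 ?_
  filter_upwards [hH] with ω hω
  rw [Real.norm_eq_abs, Real.abs_exp, Real.exp_le_one_iff]
  simpa using mul_nonneg hlam hω

lemma integral_exp_neg_mul_le [IsProbabilityMeasure μ] (hH : ∀ᵐ ω ∂μ, 0 ≤ H ω)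
    (hH1 : Integrable H μ) (hH2 : Integrable (fun ω => H ω ^ 2) μ) (hlam : 0 ≤ lam) :
    ∫ ω, Real.exp (-(lam * H ω)) ∂μ ≤
      1 - lam * ∫ ω, H ω ∂μ + lam ^ 2 * (∫ ω, H ω ^ 2 ∂μ) / 2 := by
  have hlin : Integrable (fun ω => 1 - lam * H ω) μ := (integrable_const 1).sub (hH1.const_mul lam)
  have hquad : Integrable (fun ω => lam ^ 2 * H ω ^ 2 / 2) μ := (hH2.const_mul _).div_const 2
  calc ∫ ω, Real.exp (-(lam * H ω)) ∂μ
      ≤ ∫ ω, (1 - lam * H ω + lam ^ 2 * H ω ^ 2 / 2) ∂μ := by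
        refine integral_mono_ae (integrable_exp_neg_mul hH hH1.1 hlam) (hlin.add hquad) ?_
        filter_upwards [hH] with ω hω
        exact (Real.exp_neg_le_one_sub_add_sq_div_two (mul_nonneg hlam hω)).trans_eq (by ring)
    _ = 1 - lam * ∫ ω, H ω ∂μ + lam ^ 2 * (∫ ω, H ω ^ 2 ∂μ) / 2 := by
        rw [integral_add hlin hquad, integral_sub (integrable_const 1) (hH1.const_mul lam),
          integral_div, integral_const_mul, integral_const_mul]
        simp

end Laplace

lemma mean_aoi_fcfs_le_lcfs_of_mul_le {lam EH EH2 h : ℝ} (hlam : 0 < lam) (hh : 0 < h)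
    (hρ0 : 0 < lam * EH) (hρ1 : lam * EH < 1)
    (hkey : h * (lam ^ 2 * EH2 + 2 * (lam * EH) * (1 - lam * EH)) ≤
      2 * (lam * EH) * (1 - lam * EH)) :
    lam * EH2 / (2 * (1 - lam * EH)) + EH + (1 - lam * EH) * EH / (lam * EH * h) ≤
      1 / (lam * h) := by
  have hEH : EH ≠ 0 := right_ne_zero_of_mul hρ0.ne'
  have hgap : 1 / (lam * h) - (lam * EH2 / (2 * (1 - lam * EH)) + EH +
      (1 - lam * EH) * EH / (lam * EH * h)) =
      (2 * (lam * EH) * (1 - lam * EH) - h * (lam ^ 2 * EH2 + 2 * (lam * EH) * (1 - lam * EH))) /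
        (2 * (lam * h) * (1 - lam * EH)) := by
    have : 1 - lam * EH ≠ 0 := by linarith
    field_simp
    ring
  rw [← sub_nonneg, hgap]
  exact div_nonneg (by linarith) (by nlinarith [mul_pos hlam hh])

theorem stmt_19_general {Ω : Type*} [MeasurableSpace Ω] (μ : Measure Ω) [IsProbabilityMeasure μ]
    (H : Ω → ℝ) (hHpos : ∀ ω, 0 ≤ H ω)
    (hHint : Integrable H μ) (hH2int : Integrable (fun ω => H ω ^ 2) μ)
    (EH EH2 : ℝ) (hEH : EH = ∫ ω, H ω ∂μ) (hEH2 : EH2 = ∫ ω, H ω ^ 2 ∂μ)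
    (hEHpos : 0 < EH)
    (lam : ℝ) (hlam : 0 < lam)
    (ρ : ℝ) (hρdef : ρ = lam * EH)
    (hstarlam : ℝ) (hhstarlam : hstarlam = ∫ ω, Real.exp (-(lam * H ω)) ∂μ)
    (v : ℝ → ℝ)
    (hv : ∀ r : ℝ, v r = (Real.sqrt (1 + r ^ 2 * ((2 - r) ^ 2 - 2)) - 1) / r ^ 2) :
    (StrictAntiOn v (Set.Ioo 0 (2 - Real.sqrt 2)) ∧
      (∀ r ∈ Set.Ioo (0 : ℝ) (2 - Real.sqrt 2), v r < 1) ∧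
      Tendsto v (𝓝[>] 0) (𝓝 1)) ∧
    (ρ ∈ Set.Ioo (0 : ℝ) (2 - Real.sqrt 2) → EH2 / EH ^ 2 - 1 ≤ v ρ →
      1 / (lam * hstarlam) ≥
        lam * EH2 / (2 * (1 - ρ)) + EH + (1 - ρ) * EH / (ρ * hstarlam)) := by
  obtain rfl : v = aoiThreshold := funext hv
  refine ⟨⟨strictAntiOn_aoiThreshold, fun r hr => aoiThreshold_lt_one hr,
    tendsto_aoiThreshold_nhdsGT_zero⟩, fun hρ hcv => ?_⟩
  subst hρdef
  set c := EH2 / EH ^ 2 - 1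
  have hH : ∀ᵐ ω ∂μ, 0 ≤ H ω := ae_of_all _ hHpos
  have hEH2nn : 0 ≤ EH2 := hEH2 ▸ integral_nonneg fun ω => sq_nonneg (H ω)
  have hm : lam ^ 2 * EH2 = (1 + c) * (lam * EH) ^ 2 := by simp only [c]; field_simp; ring
  have hc : -1 ≤ c := by simp only [c]; linarith [div_nonneg hEH2nn (sq_nonneg EH)]
  have hh0 : 0 < hstarlam :=
    hhstarlam ▸ integral_exp_pos (integrable_exp_neg_mul hH hHint.1 hlam.le)
  have hh1 : hstarlam ≤ 1 - lam * EH + lam ^ 2 * EH2 / 2 := by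
    rw [hhstarlam, hEH, hEH2]
    exact integral_exp_neg_mul_le hH hHint hH2int hlam.le
  have hq := sq_mul_sq_add_two_mul_le_of_le_aoiThreshold hρ hc hcv
  have hρ1 := lt_one_of_lt_two_sub_sqrt_two hρ.2
  refine mean_aoi_fcfs_le_lcfs_of_mul_le hlam hh0 hρ.1 hρ1 ?_
  have hρ0 := hρ.1
  calc hstarlam * (lam ^ 2 * EH2 + 2 * (lam * EH) * (1 - lam * EH))
      ≤ (1 - lam * EH + lam ^ 2 * EH2 / 2) *
          (lam ^ 2 * EH2 + 2 * (lam * EH) * (1 - lam * EH)) := by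
        have : 0 ≤ 1 - lam * EH := by linarith
        gcongr
    _ ≤ 2 * (lam * EH) * (1 - lam * EH) := by
        rw [hm]
        linear_combination ((lam * EH) ^ 2 / 2) * hq

/-- Sufficient condition for `E[A_LCFS^P] ≥ E[A_FCFS]` in the stationary M/GI/1
queue: with `ρ = λE[H]`, `Cv[H]² = E[H²]/E[H]² - 1` and
`v(ρ) = (√(1 + ρ²((2-ρ)² - 2)) - 1)/ρ²`, (i) `v` is strictly decreasing on
`(0, 2-√2)` with `v(ρ) < 1 = lim_{ρ→0+} v(ρ)`, and (ii) if `ρ ∈ (0, 2-√2)` and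
`Cv[H]² ≤ v(ρ)` then `1/(λ h*(λ)) ≥ λE[H²]/(2(1-ρ)) + E[H] + (1-ρ)E[H]/(ρ h*(λ))`. -/
theorem stmt_19 {Ω : Type*} [MeasurableSpace Ω] (μ : Measure Ω) [IsProbabilityMeasure μ]
    (H : Ω → ℝ) (hH : Measurable H) (hHpos : ∀ ω, 0 ≤ H ω)
    (hHint : Integrable H μ) (hH2int : Integrable (fun ω => H ω ^ 2) μ)
    (EH EH2 : ℝ) (hEH : EH = ∫ ω, H ω ∂μ) (hEH2 : EH2 = ∫ ω, H ω ^ 2 ∂μ)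
    (hEHpos : 0 < EH)
    (lam : ℝ) (hlam : 0 < lam)
    (ρ : ℝ) (hρdef : ρ = lam * EH)
    (hstarlam : ℝ) (hhstarlam : hstarlam = ∫ ω, Real.exp (-(lam * H ω)) ∂μ)
    (v : ℝ → ℝ)
    (hv : ∀ r : ℝ, v r = (Real.sqrt (1 + r ^ 2 * ((2 - r) ^ 2 - 2)) - 1) / r ^ 2) :
    (StrictAntiOn v (Set.Ioo 0 (2 - Real.sqrt 2)) ∧
      (∀ r ∈ Set.Ioo (0 : ℝ) (2 - Real.sqrt 2), v r < 1) ∧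
      Tendsto v (𝓝[>] 0) (𝓝 1)) ∧
    (ρ ∈ Set.Ioo (0 : ℝ) (2 - Real.sqrt 2) → EH2 / EH ^ 2 - 1 ≤ v ρ →
      1 / (lam * hstarlam) ≥
        lam * EH2 / (2 * (1 - ρ)) + EH + (1 - ρ) * EH / (ρ * hstarlam)) :=
  stmt_19_general μ H hHpos hHint hH2int EH EH2 hEH hEH2 hEHpos lam hlam ρ hρdef hstarlam hhstarlam
    v hv
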